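/- arXiv:2412.04124 — 7 statements merged into one kernel-verified Lean document; each statement's English description precedes it below -/
import Mathlib

section
/- Let ω : ℝ × ℝ → ℝ be a smooth nowhere-vanishing function and set s = 1/ω. Then s satisfies s_τ = s_{yy} - (2/s)(s_y² + 2β s_y) if and only if ω satisfies the Burgers-type equation ω_τ = ω_{yy} - 4β ω ω_y. -/
/-- partial derivative in the first (spatial) variable -/
noncomputable def pdx (f : ℝ → ℝ → ℝ) (x t : ℝ) : ℝ := deriv (fun x' => f x' t) x
/-- partial derivative in the second (time) variable -/
noncomputable def pdt (f : ℝ → ℝ → ℝ) (x t : ℝ) : ℝ := deriv (fun t' => f x t') t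

private lemma hasDerivAt_fst' (F : ℝ × ℝ → ℝ) (hF : Differentiable ℝ F) (y t : ℝ) :
    HasDerivAt (fun x => F (x, t)) (fderiv ℝ F (y, t) (1, 0)) y :=
  (hF (y, t)).hasFDerivAt.comp_hasDerivAt y ((hasDerivAt_id y).prodMk (hasDerivAt_const y t))

private lemma hasDerivAt_snd' (F : ℝ × ℝ → ℝ) (hF : Differentiable ℝ F) (y t : ℝ) :
    HasDerivAt (fun t' => F (y, t')) (fderiv ℝ F (y, t) (0, 1)) t :=
  (hF (y, t)).hasFDerivAt.comp_hasDerivAt t ((hasDerivAt_const t y).prodMk (hasDerivAt_id t))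

private lemma alg (β w a b c : ℝ) (hw : w ≠ 0) :
    (-c / w ^ 2 = (-b * (w ^ 2) - (-a) * (2 * w ^ 1 * a)) / (w ^ 2) ^ 2
        - (2 / (1 / w)) * ((-a / w ^ 2) ^ 2 + 2 * β * (-a / w ^ 2)))
    ↔ c = b - 4 * β * w * a := by
  constructor <;> intro h
  · field_simp at h
    have h2 : (c - (b - 4 * β * w * a)) * w ^ 10 = 0 := by linear_combination -w ^ 9 * h
    rcases mul_eq_zero.mp h2 with h3 | h3
    · linarith [sub_eq_zero.mp h3]
    · exact absurd h3 (pow_ne_zero _ hw)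
  · field_simp
    rw [h]; ring

/-- s = 1/ω satisfies s_τ = s_{yy} - (2/s)(s_y² + 2β s_y) iff ω satisfies
the Burgers-type equation ω_τ = ω_{yy} - 4β ω ω_y. -/
theorem stmt_0 (β : ℝ) (ω : ℝ → ℝ → ℝ)
    (hω : ContDiff ℝ (⊤ : ℕ∞) (Function.uncurry ω))
    (hω0 : ∀ y τ, ω y τ ≠ 0)
    (s : ℝ → ℝ → ℝ) (hs : ∀ y τ, s y τ = 1 / ω y τ) :
    (∀ y τ, pdt s y τ =
        pdx (pdx s) y τ - (2 / s y τ) * ((pdx s y τ) ^ 2 + 2 * β * pdx s y τ))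
    ↔ (∀ y τ, pdt ω y τ = pdx (pdx ω) y τ - 4 * β * ω y τ * pdx ω y τ) := by
  set F := Function.uncurry ω with hF
  have hFd : Differentiable ℝ F := hω.differentiable (by simp)
  set G : ℝ × ℝ → ℝ := fun p => fderiv ℝ F p (1, 0) with hG
  have hGc : ContDiff ℝ (⊤ : ℕ∞) G := (hω.fderiv_right (by simp)).clm_apply contDiff_const
  have hGd : Differentiable ℝ G := hGc.differentiable (by simp)
  -- names
  set wy : ℝ → ℝ → ℝ := fun y τ => G (y, τ) with hwydef
  set wyy : ℝ → ℝ → ℝ := fun y τ => fderiv ℝ G (y, τ) (1, 0) with hwyydef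
  set wt : ℝ → ℝ → ℝ := fun y τ => fderiv ℝ F (y, τ) (0, 1) with hwtdef
  have hωx : ∀ y τ, HasDerivAt (fun x => ω x τ) (wy y τ) y := fun y τ =>
    hasDerivAt_fst' F hFd y τ
  have hωt : ∀ y τ, HasDerivAt (fun t' => ω y t') (wt y τ) τ := fun y τ =>
    hasDerivAt_snd' F hFd y τ
  have hwyx : ∀ y τ, HasDerivAt (fun x => wy x τ) (wyy y τ) y := fun y τ =>
    hasDerivAt_fst' G hGd y τ
  have hpdxω : ∀ y τ, pdx ω y τ = wy y τ := fun y τ => (hωx y τ).deriv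
  have hpdtω : ∀ y τ, pdt ω y τ = wt y τ := fun y τ => (hωt y τ).deriv
  have hpdxxω : ∀ y τ, pdx (pdx ω) y τ = wyy y τ := by
    intro y τ
    have : (fun x => pdx ω x τ) = fun x => wy x τ := funext fun x => hpdxω x τ
    rw [pdx, this]; exact (hwyx y τ).deriv
  -- derivatives of s
  have hsx : ∀ y τ, HasDerivAt (fun x => s x τ) (-(wy y τ) / (ω y τ) ^ 2) y := by
    intro y τ
    have : (fun x => s x τ) = fun x => (ω x τ)⁻¹ := funext fun x => by rw [hs, one_div]
    rw [this]; exact (hωx y τ).inv (hω0 y τ)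
  have hpdxs : ∀ y τ, pdx s y τ = -(wy y τ) / (ω y τ) ^ 2 := fun y τ => (hsx y τ).deriv
  have hst : ∀ y τ, pdt s y τ = -(wt y τ) / (ω y τ) ^ 2 := by
    intro y τ
    have : (fun t' => s y t') = fun t' => (ω y t')⁻¹ := funext fun t' => by rw [hs, one_div]
    rw [pdt, this]; exact (((hωt y τ).inv (hω0 y τ))).deriv
  have hsxx : ∀ y τ, pdx (pdx s) y τ =
      (-(wyy y τ) * (ω y τ ^ 2) - (-(wy y τ)) * (2 * ω y τ ^ 1 * wy y τ)) / (ω y τ ^ 2) ^ 2 := by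
    intro y τ
    have heq : (fun x => pdx s x τ) = fun x => -(wy x τ) / (ω x τ) ^ 2 :=
      funext fun x => hpdxs x τ
    rw [pdx, heq]
    exact (((hwyx y τ).neg).div ((hωx y τ).pow 2) (pow_ne_zero _ (hω0 y τ))).deriv
  constructor
  · intro h y τ
    have h' := h y τ
    rw [hst, hsxx, hpdxs, hs] at h'
    rw [hpdtω, hpdxxω, hpdxω]
    exact (alg β (ω y τ) (wy y τ) (wyy y τ) (wt y τ) (hω0 y τ)).mp h'
  · intro h y τ
    have h' := h y τ
    rw [hpdtω, hpdxxω, hpdxω] at h'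
    rw [hst, hsxx, hpdxs, hs]
    exact (alg β (ω y τ) (wy y τ) (wyy y τ) (wt y τ) (hω0 y τ)).mpr h'
end

section
/- Under the hypotheses of the spectral problem Φ_x = U Φ and adjoint problem Ψ_x = -Ψ U with U = [[β+λn, 1],[α+λm, -β-λn]], setting a = ψ₂φ₁ and w = ψ₁φ₁ - ψ₂φ₂, one has the second-order identity w_{xx} + 2(β+λn) w_x = -4α a_x - 2λ (m a_x + (m a)_x). -/
/-- for the spectral problem Φ_x = UΦ and adjoint Ψ_x = -ΨU with
U = [[β+λn, 1],[α+λm, -β-λn]], setting a = ψ₂φ₁ and w = ψ₁φ₁ - ψ₂φ₂, one has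
w_{xx} + 2(β+λn) w_x = -4α a_x - 2λ (m a_x + (m a)_x). -/
theorem stmt_4 (α β lam : ℝ) (m n φ₁ φ₂ ψ₁ ψ₂ a w : ℝ → ℝ)
    (ha : a = fun x => ψ₂ x * φ₁ x)
    (hw : w = fun x => ψ₁ x * φ₁ x - ψ₂ x * φ₂ x)
    (hm : ContDiff ℝ (⊤ : ℕ∞) m) (hn : ContDiff ℝ (⊤ : ℕ∞) n)
    (hφ₁s : ContDiff ℝ (⊤ : ℕ∞) φ₁) (hφ₂s : ContDiff ℝ (⊤ : ℕ∞) φ₂)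
    (hψ₁s : ContDiff ℝ (⊤ : ℕ∞) ψ₁) (hψ₂s : ContDiff ℝ (⊤ : ℕ∞) ψ₂)
    (hφ₁ : ∀ x, deriv φ₁ x = (β + lam * n x) * φ₁ x + φ₂ x)
    (hφ₂ : ∀ x, deriv φ₂ x = (α + lam * m x) * φ₁ x - (β + lam * n x) * φ₂ x)
    (hψ₁ : ∀ x, deriv ψ₁ x = -(β + lam * n x) * ψ₁ x - (α + lam * m x) * ψ₂ x)
    (hψ₂ : ∀ x, deriv ψ₂ x = -ψ₁ x + (β + lam * n x) * ψ₂ x) :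
    ∀ x, deriv (deriv w) x + 2 * (β + lam * n x) * deriv w x =
      -4 * α * deriv a x - 2 * lam * (m x * deriv a x + deriv (fun x => m x * a x) x) := by
  subst ha hw
  have Dm := hm.differentiable (by simp)
  have Dφ₁ := hφ₁s.differentiable (by simp)
  have Dφ₂ := hφ₂s.differentiable (by simp)
  have Dψ₁ := hψ₁s.differentiable (by simp)
  have Dψ₂ := hψ₂s.differentiable (by simp)
  have Hφ₁ : ∀ x, HasDerivAt φ₁ ((β + lam * n x) * φ₁ x + φ₂ x) x :=
    fun x => hφ₁ x ▸ (Dφ₁ x).hasDerivAt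
  have Hφ₂ : ∀ x, HasDerivAt φ₂ ((α + lam * m x) * φ₁ x - (β + lam * n x) * φ₂ x) x :=
    fun x => hφ₂ x ▸ (Dφ₂ x).hasDerivAt
  have Hψ₁ : ∀ x, HasDerivAt ψ₁ (-(β + lam * n x) * ψ₁ x - (α + lam * m x) * ψ₂ x) x :=
    fun x => hψ₁ x ▸ (Dψ₁ x).hasDerivAt
  have Hψ₂ : ∀ x, HasDerivAt ψ₂ (-ψ₁ x + (β + lam * n x) * ψ₂ x) x :=
    fun x => hψ₂ x ▸ (Dψ₂ x).hasDerivAt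
  have Hm : ∀ x, HasDerivAt m (deriv m x) x := fun x => (Dm x).hasDerivAt
  -- first derivative of w
  have hw1 : ∀ x, deriv (fun x => ψ₁ x * φ₁ x - ψ₂ x * φ₂ x) x
      = -2 * (α + lam * m x) * (ψ₂ x * φ₁ x) + 2 * (ψ₁ x * φ₂ x) := by
    intro x
    have H := (((Hψ₁ x).mul (Hφ₁ x)).sub ((Hψ₂ x).mul (Hφ₂ x))).deriv
    rw [show (fun x => ψ₁ x * φ₁ x - ψ₂ x * φ₂ x) = ψ₁ * φ₁ - ψ₂ * φ₂ from rfl, H]; ring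
  -- derivative of a
  have hax : ∀ x, deriv (fun x => ψ₂ x * φ₁ x) x
      = -(ψ₁ x * φ₁ x) + 2 * (β + lam * n x) * (ψ₂ x * φ₁ x) + ψ₂ x * φ₂ x := by
    intro x
    have H := ((Hψ₂ x).mul (Hφ₁ x)).deriv
    rw [show (fun x => ψ₂ x * φ₁ x) = ψ₂ * φ₁ from rfl, H]; ring
  -- derivative of m * a
  have hma : ∀ x, deriv (fun x => m x * (ψ₂ x * φ₁ x)) x
      = deriv m x * (ψ₂ x * φ₁ x)
        + m x * (-(ψ₁ x * φ₁ x) + 2 * (β + lam * n x) * (ψ₂ x * φ₁ x) + ψ₂ x * φ₂ x) := by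
    intro x
    have H := ((Hm x).mul ((Hψ₂ x).mul (Hφ₁ x))).deriv
    rw [show (fun x => m x * (ψ₂ x * φ₁ x)) = m * (ψ₂ * φ₁) from rfl, H, Pi.mul_apply]; ring
  intro x
  -- second derivative of w
  have hw2 : deriv (deriv (fun x => ψ₁ x * φ₁ x - ψ₂ x * φ₂ x)) x
      = deriv (fun x => -2 * (α + lam * m x) * (ψ₂ x * φ₁ x) + 2 * (ψ₁ x * φ₂ x)) x := by
    congr 1; funext y; exact hw1 y
  have H2 : HasDerivAt (fun x => -2 * (α + lam * m x) * (ψ₂ x * φ₁ x) + 2 * (ψ₁ x * φ₂ x))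
      (-2 * (lam * deriv m x) * (ψ₂ x * φ₁ x)
        + -2 * (α + lam * m x) * ((-ψ₁ x + (β + lam * n x) * ψ₂ x) * φ₁ x
            + ψ₂ x * ((β + lam * n x) * φ₁ x + φ₂ x))
        + 2 * ((-(β + lam * n x) * ψ₁ x - (α + lam * m x) * ψ₂ x) * φ₂ x
            + ψ₁ x * ((α + lam * m x) * φ₁ x - (β + lam * n x) * φ₂ x))) x := by
    have h1 : HasDerivAt (fun x => -2 * (α + lam * m x)) (-2 * (lam * deriv m x)) x := by
      simpa using (((Hm x).const_mul lam).const_add α).const_mul (-2 : ℝ)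
    exact (h1.mul ((Hψ₂ x).mul (Hφ₁ x))).add (((Hψ₁ x).mul (Hφ₂ x)).const_mul 2)
  rw [hw2, H2.deriv, hw1 x, hax x]
  rw [hma x]
  ring
end

section
/- Under the hypotheses of the spectral problem Φ_x = U Φ and adjoint problem Ψ_x = -Ψ U with U = [[β+λn, 1],[α+λm, -β-λn]], setting a = ψ₂φ₁ and w = ψ₁φ₁ - ψ₂φ₂, one has a_{xx} + w_x = 2λ (n a)_x + 2β a_x. -/
/-- for the spectral problem Φ_x = UΦ and adjoint Ψ_x = -ΨU with
U = [[β+λn, 1],[α+λm, -β-λn]], setting a = ψ₂φ₁ and w = ψ₁φ₁ - ψ₂φ₂, one has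
a_{xx} + w_x = 2λ (n a)_x + 2β a_x. -/
theorem stmt_5 (α β lam : ℝ) (m n φ₁ φ₂ ψ₁ ψ₂ a w : ℝ → ℝ)
    (ha : a = fun x => ψ₂ x * φ₁ x)
    (hw : w = fun x => ψ₁ x * φ₁ x - ψ₂ x * φ₂ x)
    (hm : ContDiff ℝ (⊤ : ℕ∞) m) (hn : ContDiff ℝ (⊤ : ℕ∞) n)
    (hφ₁s : ContDiff ℝ (⊤ : ℕ∞) φ₁) (hφ₂s : ContDiff ℝ (⊤ : ℕ∞) φ₂)
    (hψ₁s : ContDiff ℝ (⊤ : ℕ∞) ψ₁) (hψ₂s : ContDiff ℝ (⊤ : ℕ∞) ψ₂)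
    (hφ₁ : ∀ x, deriv φ₁ x = (β + lam * n x) * φ₁ x + φ₂ x)
    (hφ₂ : ∀ x, deriv φ₂ x = (α + lam * m x) * φ₁ x - (β + lam * n x) * φ₂ x)
    (hψ₁ : ∀ x, deriv ψ₁ x = -(β + lam * n x) * ψ₁ x - (α + lam * m x) * ψ₂ x)
    (hψ₂ : ∀ x, deriv ψ₂ x = -ψ₁ x + (β + lam * n x) * ψ₂ x) :
    ∀ x, deriv (deriv a) x + deriv w x =
      2 * lam * deriv (fun x => n x * a x) x + 2 * β * deriv a x := by
  have dφ₁ : Differentiable ℝ φ₁ := hφ₁s.differentiable (by simp)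
  have dφ₂ : Differentiable ℝ φ₂ := hφ₂s.differentiable (by simp)
  have dψ₁ : Differentiable ℝ ψ₁ := hψ₁s.differentiable (by simp)
  have dψ₂ : Differentiable ℝ ψ₂ := hψ₂s.differentiable (by simp)
  have dn : Differentiable ℝ n := hn.differentiable (by simp)
  have da : Differentiable ℝ a := by rw [ha]; exact dψ₂.mul dφ₁
  have dw : Differentiable ℝ w := by rw [hw]; exact (dψ₁.mul dφ₁).sub (dψ₂.mul dφ₂)
  have dna : Differentiable ℝ (fun x => n x * a x) := dn.mul da
  have key : deriv a = fun x => -w x + (2 * lam * (n x * a x) + 2 * β * a x) := by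
    funext x
    rw [ha, hw]
    rw [deriv_fun_mul (dψ₂ x) (dφ₁ x), hψ₂, hφ₁]
    ring
  intro x
  rw [key]
  rw [deriv_fun_add ((dw x).fun_neg) (((dna x).const_mul _).fun_add ((da x).const_mul _)),
    deriv_fun_add ((dna x).const_mul _) ((da x).const_mul _),
    deriv.fun_neg, deriv_const_mul _ (dna x), deriv_const_mul _ (da x), key]
  ring
end

section
/- Let κ, β be real constants with κ ≠ 0, and let u, v, m, n be smooth functions of (x,t) satisfying m = u_{xx} - u, n = v - v_{xx}, and the rescaled XDG system m_t = (∂_x m + m ∂_x)(κ v_x + 2β v - u) + n (κ u_x - 2β u - 4α v)_x (with 4α = κ² - 4β²), n_t = [n (κ v_x + 2β v - u)]_x. Define p = -(κ n_x + 2β n + m), ρ = κ n, q = -κ v_x - 2β v + u. Then (p, ρ, q) satisfies the two-component Camassa–Holm equation: p_t + q p_x + 2 p q_x - ρ ρ_x = 0, ρ_t + (ρ q)_x = 0, and p = q - q_{xx}. -/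
lemma HX {f : ℝ → ℝ → ℝ} (hf : ContDiff ℝ (⊤ : ℕ∞) (Function.uncurry f)) (x t : ℝ) :
    HasDerivAt (fun x' => f x' t) (pdx f x t) x := by
  have : DifferentiableAt ℝ (fun x' => f x' t) x :=
    ((hf.comp (contDiff_id.prodMk contDiff_const)).differentiable (by simp)).differentiableAt
  exact this.hasDerivAt

lemma HT {f : ℝ → ℝ → ℝ} (hf : ContDiff ℝ (⊤ : ℕ∞) (Function.uncurry f)) (x t : ℝ) :
    HasDerivAt (fun t' => f x t') (pdt f x t) t := by
  have : DifferentiableAt ℝ (fun t' => f x t') t :=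
    ((hf.comp (contDiff_const.prodMk contDiff_id)).differentiable (by simp)).differentiableAt
  exact this.hasDerivAt

lemma pdx_fd {f : ℝ → ℝ → ℝ} (hf : ContDiff ℝ (⊤ : ℕ∞) (Function.uncurry f)) (x t : ℝ) :
    pdx f x t = fderiv ℝ (Function.uncurry f) (x, t) (1, 0) := by
  have h : HasFDerivAt (fun x' : ℝ => ((x', t) : ℝ × ℝ))
      ((ContinuousLinearMap.id ℝ ℝ).prod 0) x :=
    (hasFDerivAt_id x).prodMk (hasFDerivAt_const t x)
  have h2 := (((hf.differentiable (by simp)) (x, t)).hasFDerivAt.comp x h).hasDerivAt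
  have h3 : pdx f x t = _ := h2.deriv
  rw [h3]; simp

lemma pdt_fd {f : ℝ → ℝ → ℝ} (hf : ContDiff ℝ (⊤ : ℕ∞) (Function.uncurry f)) (x t : ℝ) :
    pdt f x t = fderiv ℝ (Function.uncurry f) (x, t) (0, 1) := by
  have h : HasFDerivAt (fun t' : ℝ => ((x, t') : ℝ × ℝ))
      ((0 : ℝ →L[ℝ] ℝ).prod (ContinuousLinearMap.id ℝ ℝ)) t :=
    (hasFDerivAt_const x t).prodMk (hasFDerivAt_id t)
  have h2 := (((hf.differentiable (by simp)) (x, t)).hasFDerivAt.comp t h).hasDerivAt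
  have h3 : pdt f x t = _ := h2.deriv
  rw [h3]; simp

lemma contDiff_pdx {f : ℝ → ℝ → ℝ} (hf : ContDiff ℝ (⊤ : ℕ∞) (Function.uncurry f)) :
    ContDiff ℝ (⊤ : ℕ∞) (Function.uncurry (pdx f)) := by
  have h : Function.uncurry (pdx f)
      = fun p : ℝ × ℝ => fderiv ℝ (Function.uncurry f) p ((1 : ℝ), (0 : ℝ)) := by
    funext p
    exact pdx_fd hf p.1 p.2
  rw [h]
  exact (ContinuousLinearMap.apply ℝ ℝ ((1 : ℝ), (0 : ℝ))).contDiff.comp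
    (hf.fderiv_right (by simp))

lemma pd_comm {f : ℝ → ℝ → ℝ} (hf : ContDiff ℝ (⊤ : ℕ∞) (Function.uncurry f)) (x t : ℝ) :
    pdt (pdx f) x t = pdx (pdt f) x t := by
  have hf' : ContDiff ℝ (⊤ : ℕ∞) (fderiv ℝ (Function.uncurry f)) := hf.fderiv_right (by simp)
  have hd' := hf'.differentiable (by simp)
  have sym : ∀ w y, fderiv ℝ (fderiv ℝ (Function.uncurry f)) (x, t) w y
      = fderiv ℝ (fderiv ℝ (Function.uncurry f)) (x, t) y w :=
    hf.contDiffAt.isSymmSndFDerivAt (by rw [minSmoothness_of_isRCLikeNormedField]; exact WithTop.coe_le_coe.mpr le_top)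
  have e1 : pdt (pdx f) x t
      = fderiv ℝ (fderiv ℝ (Function.uncurry f)) (x, t) (0, 1) (1, 0) := by
    have hc : HasFDerivAt (fun t' : ℝ => ((x, t') : ℝ × ℝ))
        ((0 : ℝ →L[ℝ] ℝ).prod (ContinuousLinearMap.id ℝ ℝ)) t :=
      (hasFDerivAt_const x t).prodMk (hasFDerivAt_id t)
    have h3 := (hd' (x, t)).hasFDerivAt.comp t hc
    have h4 := ((ContinuousLinearMap.apply ℝ ℝ ((1 : ℝ), (0 : ℝ))).hasFDerivAt.comp t
      h3).hasDerivAt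
    have h4' : HasDerivAt
        (fun t' => fderiv ℝ (Function.uncurry f) (x, t') ((1 : ℝ), (0 : ℝ))) _ t := h4
    have h5 : (fun t' => fderiv ℝ (Function.uncurry f) (x, t') ((1 : ℝ), (0 : ℝ)))
        = fun t' => pdx f x t' := by
      funext t'
      exact (pdx_fd hf x t').symm
    rw [h5] at h4'
    have := h4'.deriv
    rw [pdt, this]; simp
  have e2 : pdx (pdt f) x t
      = fderiv ℝ (fderiv ℝ (Function.uncurry f)) (x, t) (1, 0) (0, 1) := by
    have hc : HasFDerivAt (fun x' : ℝ => ((x', t) : ℝ × ℝ))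
        ((ContinuousLinearMap.id ℝ ℝ).prod 0) x :=
      (hasFDerivAt_id x).prodMk (hasFDerivAt_const t x)
    have h3 := (hd' (x, t)).hasFDerivAt.comp x hc
    have h4 := ((ContinuousLinearMap.apply ℝ ℝ ((0 : ℝ), (1 : ℝ))).hasFDerivAt.comp x
      h3).hasDerivAt
    have h4' : HasDerivAt
        (fun x' => fderiv ℝ (Function.uncurry f) (x', t) ((0 : ℝ), (1 : ℝ))) _ x := h4
    have h5 : (fun x' => fderiv ℝ (Function.uncurry f) (x', t) ((0 : ℝ), (1 : ℝ)))
        = fun x' => pdt f x' t := by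
      funext x'
      exact (pdt_fd hf x' t).symm
    rw [h5] at h4'
    have := h4'.deriv
    rw [pdx, this]; simp
  rw [e1, e2, sym]

/-- the Miura map p = -(κ n_x + 2β n + m), ρ = κ n, q = -κ v_x - 2β v + u
takes solutions of the rescaled XDG system to solutions of the two-component
Camassa–Holm equation. -/
theorem stmt_6 (κ β α : ℝ) (hκ : κ ≠ 0) (hα : α = (κ ^ 2 - 4 * β ^ 2) / 4)
    (u v m n : ℝ → ℝ → ℝ)
    (hu : ContDiff ℝ (⊤ : ℕ∞) (Function.uncurry u)) (hv : ContDiff ℝ (⊤ : ℕ∞) (Function.uncurry v))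
    (hms : ContDiff ℝ (⊤ : ℕ∞) (Function.uncurry m)) (hns : ContDiff ℝ (⊤ : ℕ∞) (Function.uncurry n))
    (F G : ℝ → ℝ → ℝ)
    (hF : F = fun x t => κ * pdx v x t + 2 * β * v x t - u x t)
    (hG : G = fun x t => κ * pdx u x t - 2 * β * u x t - 4 * α * v x t)
    (hmdef : ∀ x t, m x t = pdx (pdx u) x t - u x t)
    (hndef : ∀ x t, n x t = v x t - pdx (pdx v) x t)
    (hmt : ∀ x t, pdt m x t = pdx m x t * F x t + 2 * m x t * pdx F x t + n x t * pdx G x t)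
    (hnt : ∀ x t, pdt n x t = pdx (fun x t => n x t * F x t) x t)
    (p ρ q : ℝ → ℝ → ℝ)
    (hp : p = fun x t => -(κ * pdx n x t + 2 * β * n x t + m x t))
    (hρ : ρ = fun x t => κ * n x t)
    (hq : q = fun x t => -κ * pdx v x t - 2 * β * v x t + u x t) :
    ∀ x t,
      pdt p x t + q x t * pdx p x t + 2 * p x t * pdx q x t - ρ x t * pdx ρ x t = 0 ∧
      pdt ρ x t + pdx (fun x t => ρ x t * q x t) x t = 0 ∧
      p x t = q x t - pdx (pdx q) x t := by
  have hvx := contDiff_pdx hv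
  have hvxx := contDiff_pdx hvx
  have hux := contDiff_pdx hu
  have hnx := contDiff_pdx hns
  have hFs : ContDiff ℝ (⊤ : ℕ∞) (Function.uncurry F) := by
    rw [hF]; exact ((contDiff_const.mul hvx).add (contDiff_const.mul hv)).sub hu
  have hFx := contDiff_pdx hFs
  have hqs : ContDiff ℝ (⊤ : ℕ∞) (Function.uncurry q) := by
    rw [hq]; exact ((contDiff_const.mul hvx).sub (contDiff_const.mul hv)).add hu
  have hρs : ContDiff ℝ (⊤ : ℕ∞) (Function.uncurry ρ) := by
    rw [hρ]; exact contDiff_const.mul hns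
  -- pointwise derivative computations
  have eFx : ∀ a b, pdx F a b
      = κ * pdx (pdx v) a b + 2 * β * pdx v a b - pdx u a b := by
    intro a b; rw [hF]
    exact ((((HX hvx a b).const_mul κ).add
      ((HX hv a b).const_mul (2 * β))).sub (HX hu a b)).deriv
  have eFxx : ∀ a b, pdx (pdx F) a b
      = κ * pdx (pdx (pdx v)) a b + 2 * β * pdx (pdx v) a b - pdx (pdx u) a b := by
    intro a b
    have h : (fun x' => pdx F x' b)
        = fun x' => κ * pdx (pdx v) x' b + 2 * β * pdx v x' b - pdx u x' b :=
      funext fun x' => eFx x' b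
    calc pdx (pdx F) a b = deriv (fun x' => pdx F x' b) a := rfl
      _ = _ := by
        rw [h]
        exact ((((HX hvxx a b).const_mul κ).add
          ((HX hvx a b).const_mul (2 * β))).sub (HX hux a b)).deriv
  have eGx : ∀ a b, pdx G a b
      = κ * pdx (pdx u) a b - 2 * β * pdx u a b - 4 * α * pdx v a b := by
    intro a b; rw [hG]
    exact ((((HX hux a b).const_mul κ).sub
      ((HX hu a b).const_mul (2 * β))).sub ((HX hv a b).const_mul (4 * α))).deriv
  have eqx : ∀ a b, pdx q a b
      = -κ * pdx (pdx v) a b - 2 * β * pdx v a b + pdx u a b := by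
    intro a b; rw [hq]
    exact ((((HX hvx a b).const_mul (-κ)).sub
      ((HX hv a b).const_mul (2 * β))).add (HX hu a b)).deriv
  have eqxx : ∀ a b, pdx (pdx q) a b
      = -κ * pdx (pdx (pdx v)) a b - 2 * β * pdx (pdx v) a b + pdx (pdx u) a b := by
    intro a b
    have h : (fun x' => pdx q x' b)
        = fun x' => -κ * pdx (pdx v) x' b - 2 * β * pdx v x' b + pdx u x' b :=
      funext fun x' => eqx x' b
    calc pdx (pdx q) a b = deriv (fun x' => pdx q x' b) a := rfl
      _ = _ := by
        rw [h]
        exact ((((HX hvxx a b).const_mul (-κ)).sub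
          ((HX hvx a b).const_mul (2 * β))).add (HX hux a b)).deriv
  have enx : ∀ a b, pdx n a b = pdx v a b - pdx (pdx (pdx v)) a b := by
    intro a b
    have h : (fun x' => n x' b) = fun x' => v x' b - pdx (pdx v) x' b :=
      funext fun x' => hndef x' b
    calc pdx n a b = deriv (fun x' => n x' b) a := rfl
      _ = _ := by
        rw [h]
        exact ((HX hv a b).sub (HX hvxx a b)).deriv
  have enFx : ∀ a b, pdx (fun x t => n x t * F x t) a b
      = pdx n a b * F a b + n a b * pdx F a b := by
    intro a b
    exact ((HX hns a b).mul (HX hFs a b)).deriv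
  have eρx : ∀ a b, pdx ρ a b = κ * pdx n a b := by
    intro a b; rw [hρ]
    exact ((HX hns a b).const_mul κ).deriv
  have eρt : ∀ a b, pdt ρ a b = κ * pdt n a b := by
    intro a b; rw [hρ]
    exact ((HT hns a b).const_mul κ).deriv
  have eρqx : ∀ a b, pdx (fun x t => ρ x t * q x t) a b
      = pdx ρ a b * q a b + ρ a b * pdx q a b := by
    intro a b
    exact ((HX hρs a b).mul (HX hqs a b)).deriv
  have ept : ∀ a b, pdt p a b
      = -(κ * pdt (pdx n) a b + 2 * β * pdt n a b + pdt m a b) := by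
    intro a b; rw [hp]
    exact ((((HT hnx a b).const_mul κ).add
      ((HT hns a b).const_mul (2 * β))).add (HT hms a b)).neg.deriv
  have epx : ∀ a b, pdx p a b
      = -(κ * pdx (pdx n) a b + 2 * β * pdx n a b + pdx m a b) := by
    intro a b; rw [hp]
    exact ((((HX hnx a b).const_mul κ).add
      ((HX hns a b).const_mul (2 * β))).add (HX hms a b)).neg.deriv
  have entfun : pdt n = fun x t => pdx n x t * F x t + n x t * pdx F x t :=
    funext fun a => funext fun b => (hnt a b).trans (enFx a b)
  have entx : ∀ a b, pdx (pdt n) a b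
      = (pdx (pdx n) a b * F a b + pdx n a b * pdx F a b)
        + (pdx n a b * pdx F a b + n a b * pdx (pdx F) a b) := by
    intro a b
    calc pdx (pdt n) a b = deriv (fun x' => pdt n x' b) a := rfl
      _ = _ := by
        rw [entfun]
        exact (((HX hnx a b).mul (HX hFs a b)).add
          ((HX hns a b).mul (HX hFx a b))).deriv
  intro x t
  refine ⟨?_, ?_, ?_⟩
  · rw [ept x t, epx x t, eρx x t, pd_comm hns x t, entx x t, hnt x t, enFx x t,
      hmt x t, eGx x t, eFxx x t, eqx x t, eFx x t]
    simp only [hp, hρ, hq, hF]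
    rw [enx x t]
    subst hα
    ring
  · rw [eρt x t, eρqx x t, eρx x t, hnt x t, enFx x t, eqx x t, eFx x t]
    simp only [hρ, hq, hF]
    ring
  · rw [eqxx x t]
    simp only [hp, hq]
    rw [enx x t, hndef x t, hmdef x t]
    ring
end

section
/- Let β be a real constant and let u, v, m, n be smooth functions of (x,t) satisfying m = u_{xx} - u, n = v - v_{xx}, with the Miura map p = -(n_x + 2β n + m), q = -v_x - 2β v + u. Then p = q - q_{xx}. -/
/-- if m = u_{xx} - u, n = v - v_{xx}, p = -(n_x + 2β n + m) and
q = -v_x - 2β v + u, then p = q - q_{xx}. -/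
theorem stmt_7 (β : ℝ) (u v m n : ℝ → ℝ → ℝ)
    (hu : ContDiff ℝ (⊤ : ℕ∞) (Function.uncurry u)) (hv : ContDiff ℝ (⊤ : ℕ∞) (Function.uncurry v))
    (hms : ContDiff ℝ (⊤ : ℕ∞) (Function.uncurry m)) (hns : ContDiff ℝ (⊤ : ℕ∞) (Function.uncurry n))
    (hmdef : ∀ x t, m x t = pdx (pdx u) x t - u x t)
    (hndef : ∀ x t, n x t = v x t - pdx (pdx v) x t)
    (p q : ℝ → ℝ → ℝ)
    (hp : p = fun x t => -(pdx n x t + 2 * β * n x t + m x t))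
    (hq : q = fun x t => -pdx v x t - 2 * β * v x t + u x t) :
    ∀ x t, p x t = q x t - pdx (pdx q) x t := by
  subst hp hq
  intro x t
  have hslice : ∀ (f : ℝ → ℝ → ℝ), ContDiff ℝ (⊤ : ℕ∞) (Function.uncurry f) →
      ContDiff ℝ (⊤ : ℕ∞) (fun x' : ℝ => f x' t) := fun f hf =>
    hf.comp (contDiff_id.prodMk contDiff_const)
  have hU : ContDiff ℝ (⊤ : ℕ∞) (fun x' : ℝ => u x' t) := (hslice u hu).of_le (by simp)
  have hV : ContDiff ℝ (⊤ : ℕ∞) (fun x' : ℝ => v x' t) := (hslice v hv).of_le (by simp)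
  set U : ℝ → ℝ := fun x' => u x' t with hUdef
  set V : ℝ → ℝ := fun x' => v x' t with hVdef
  have hV1 : ContDiff ℝ (⊤ : ℕ∞) (deriv V) := (contDiff_infty_iff_deriv.mp hV).2
  have hV2 : ContDiff ℝ (⊤ : ℕ∞) (deriv (deriv V)) := (contDiff_infty_iff_deriv.mp hV1).2
  have hV3 : ContDiff ℝ (⊤ : ℕ∞) (deriv (deriv (deriv V))) := (contDiff_infty_iff_deriv.mp hV2).2
  have hU1 : ContDiff ℝ (⊤ : ℕ∞) (deriv U) := (contDiff_infty_iff_deriv.mp hU).2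
  have hU2 : ContDiff ℝ (⊤ : ℕ∞) (deriv (deriv U)) := (contDiff_infty_iff_deriv.mp hU1).2
  have D : ∀ (f : ℝ → ℝ), ContDiff ℝ (⊤ : ℕ∞) f → ∀ a : ℝ, HasDerivAt f (deriv f a) a :=
    fun f hf a => (hf.differentiable (by simp) a).hasDerivAt
  -- basic pdx identities
  have hpv : ∀ a, pdx v a t = deriv V a := fun _ => rfl
  have hpvv : ∀ a, pdx (pdx v) a t = deriv (deriv V) a := fun _ => rfl
  have hpuu : ∀ a, pdx (pdx u) a t = deriv (deriv U) a := fun _ => rfl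
  -- n slice
  have hnslice : (fun x' : ℝ => n x' t) = fun x' => V x' - deriv (deriv V) x' := by
    funext a; rw [hndef a t, hpvv a]
  -- pdx n
  have hpn : pdx n x t = deriv V x - deriv (deriv (deriv V)) x := by
    show deriv (fun x' => n x' t) x = _
    rw [hnslice]
    exact ((D V hV x).sub (D _ hV2 x)).deriv
  -- q slice derivative
  have hq1 : ∀ a : ℝ, pdx (fun x'' t' => -pdx v x'' t' - 2 * β * v x'' t' + u x'' t') a t
      = -deriv (deriv V) a - 2 * β * deriv V a + deriv U a := by
    intro a
    show deriv (fun x'' => -pdx v x'' t - 2 * β * v x'' t + u x'' t) a = _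
    have : (fun x'' => -pdx v x'' t - 2 * β * v x'' t + u x'' t)
        = fun x'' => -deriv V x'' - 2 * β * V x'' + U x'' := by
      funext b; rw [hpv b]
    rw [this]
    exact (((D _ hV1 a).neg.sub (HasDerivAt.const_mul (2 * β) (D V hV a))).add
      (D U hU a)).deriv
  have hq2 : pdx (pdx (fun x'' t' => -pdx v x'' t' - 2 * β * v x'' t' + u x'' t')) x t
      = -deriv (deriv (deriv V)) x - 2 * β * deriv (deriv V) x + deriv (deriv U) x := by
    show deriv (fun x' => pdx (fun x'' t' => -pdx v x'' t' - 2 * β * v x'' t' + u x'' t') x' t) x = _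
    have : (fun x' => pdx (fun x'' t' => -pdx v x'' t' - 2 * β * v x'' t' + u x'' t') x' t)
        = fun x' => -deriv (deriv V) x' - 2 * β * deriv V x' + deriv U x' := by
      funext a; exact hq1 a
    rw [this]
    exact (((D _ hV2 x).neg.sub (HasDerivAt.const_mul (2 * β) (D _ hV1 x))).add
      (D _ hU1 x)).deriv
  simp only [hq2, hpn, hndef x t, hmdef x t, hpvv x, hpuu x, hpv x]
  show -((deriv V x - deriv (deriv (deriv V)) x) + 2 * β * (V x - deriv (deriv V) x)
      + (deriv (deriv U) x - U x))
    = (-deriv V x - 2 * β * V x + U x)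
      - (-deriv (deriv (deriv V)) x - 2 * β * deriv (deriv V) x + deriv (deriv U) x)
  ring
end

section
/- Let m, n be fixed smooth functions, E₁ the matrix differential operator [[m∂_x + ∂_x m, n∂_x],[∂_x n, 0]], and M = [[-1, -κ∂_x - 2β],[0, κ]] with formal adjoint M† = [[-1, 0],[κ∂_x - 2β, κ]]. Set p = -(κ n_x + 2β n + m) and ρ = κ n. Then M E₁ M† equals B₁ = [[-p∂_x - ∂_x p, -ρ∂_x],[-∂_x ρ, 0]] as differential operators: for all smooth pairs (f,g), M E₁ M† (f,g) = B₁(f,g). -/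
/-- the operator identity M E₁ M† = B₁, where
M = [[-1, -κ∂ₓ - 2β],[0, κ]], M† = [[-1, 0],[κ∂ₓ - 2β, κ]],
E₁ = [[m∂ₓ + ∂ₓ m, n∂ₓ],[∂ₓ n, 0]], p = -(κ n_x + 2β n + m), ρ = κ n,
B₁ = [[-p∂ₓ - ∂ₓ p, -ρ∂ₓ],[-∂ₓ ρ, 0]]. -/
theorem stmt_9 (β κ : ℝ) (m n : ℝ → ℝ)
    (hm : ContDiff ℝ (⊤ : ℕ∞) m) (hn : ContDiff ℝ (⊤ : ℕ∞) n)
    (f g : ℝ → ℝ) (hf : ContDiff ℝ (⊤ : ℕ∞) f) (hg : ContDiff ℝ (⊤ : ℕ∞) g)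
    (p ρ : ℝ → ℝ)
    (hp : p = fun x => -(κ * deriv n x + 2 * β * n x + m x))
    (hρ : ρ = fun x => κ * n x)
    (h₁ h₂ k₁ k₂ : ℝ → ℝ)
    (hh₁ : h₁ = fun x => -f x)
    (hh₂ : h₂ = fun x => κ * deriv f x - 2 * β * f x + κ * g x)
    (hk₁ : k₁ = fun x => m x * deriv h₁ x + deriv (fun x => m x * h₁ x) x + n x * deriv h₂ x)
    (hk₂ : k₂ = fun x => deriv (fun x => n x * h₁ x) x) :
    ∀ x, (-k₁ x - κ * deriv k₂ x - 2 * β * k₂ x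
            = -(p x) * deriv f x - deriv (fun x => p x * f x) x - ρ x * deriv g x)
       ∧ (κ * k₂ x = -deriv (fun x => ρ x * f x) x) := by
  have Df : Differentiable ℝ f := hf.differentiable (by simp)
  have Df' : Differentiable ℝ (deriv f) := ((contDiff_infty_iff_deriv.mp (hf.of_le (by simp))).2).differentiable (by simp)
  have Dg : Differentiable ℝ g := hg.differentiable (by simp)
  have Dm : Differentiable ℝ m := hm.differentiable (by simp)
  have Dm' : Differentiable ℝ (deriv m) := ((contDiff_infty_iff_deriv.mp (hm.of_le (by simp))).2).differentiable (by simp)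
  have Dn : Differentiable ℝ n := hn.differentiable (by simp)
  have Dn' : Differentiable ℝ (deriv n) := ((contDiff_infty_iff_deriv.mp (hn.of_le (by simp))).2).differentiable (by simp)
  subst hp hρ hh₁ hh₂ hk₁ hk₂
  intro x
  have e1 : ∀ y, deriv (fun x => -f x) y = -deriv f y := fun y => deriv.neg
  have e2 : ∀ y, deriv (fun x => κ * deriv f x - 2 * β * f x + κ * g x) y
      = κ * deriv (deriv f) y - 2 * β * deriv f y + κ * deriv g y := by
    intro y
    rw [deriv_fun_add ((Df'.const_mul κ).fun_sub ((Df.const_mul (2*β)))).differentiableAt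
        ((Dg.const_mul κ).differentiableAt),
      deriv_fun_sub ((Df'.const_mul κ).differentiableAt) ((Df.const_mul (2*β)).differentiableAt),
      deriv_const_mul κ (Df' y), deriv_const_mul (2*β) (Df y), deriv_const_mul κ (Dg y)]
  have e3 : ∀ y, deriv (fun x => m x * -f x) y = deriv m y * -f y + m y * -deriv f y := by
    intro y
    rw [deriv_fun_mul (Dm y) (Df.fun_neg y), deriv.fun_neg]
  have e4 : ∀ y, deriv (fun x => n x * -f x) y = deriv n y * -f y + n y * -deriv f y := by
    intro y
    rw [deriv_fun_mul (Dn y) (Df.fun_neg y), deriv.fun_neg]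
  have e5 : ∀ y, deriv (fun y => deriv n y * -f y + n y * -deriv f y) y
      = deriv (deriv n) y * -f y + deriv n y * -deriv f y
        + (deriv n y * -deriv f y + n y * -deriv (deriv f) y) := by
    intro y
    rw [deriv_fun_add ((Dn'.fun_mul Df.fun_neg).differentiableAt) ((Dn.fun_mul Df'.fun_neg).differentiableAt),
      deriv_fun_mul (Dn' y) (Df.fun_neg y), deriv_fun_mul (Dn y) (Df'.fun_neg y), deriv.fun_neg, deriv.fun_neg]
  have hfun : (fun x => deriv (fun x => n x * -f x) x)
      = fun y => deriv n y * -f y + n y * -deriv f y := funext e4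
  have e6 : deriv (fun x => -(κ * deriv n x + 2 * β * n x + m x) * f x) x
      = -(κ * deriv (deriv n) x + 2 * β * deriv n x + deriv m x) * f x
        + -(κ * deriv n x + 2 * β * n x + m x) * deriv f x := by
    have hq : Differentiable ℝ (fun x => -(κ * deriv n x + 2 * β * n x + m x)) :=
      (((Dn'.const_mul κ).add (Dn.const_mul (2*β))).add Dm).neg
    rw [deriv_fun_mul (hq x) (Df x), deriv.fun_neg,
      deriv_fun_add (((Dn'.const_mul κ).fun_add (Dn.const_mul (2*β))).differentiableAt) (Dm.differentiableAt),
      deriv_fun_add ((Dn'.const_mul κ).differentiableAt) ((Dn.const_mul (2*β)).differentiableAt),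
      deriv_const_mul κ (Dn' x), deriv_const_mul (2*β) (Dn x)]
  have e7 : deriv (fun x => κ * n x * f x) x
      = κ * deriv n x * f x + κ * n x * deriv f x := by
    rw [deriv_fun_mul ((Dn.const_mul κ) x) (Df x), deriv_const_mul κ (Dn x)]
  constructor
  · simp only [hfun, e1, e2, e3, e4, e5, e6]
    ring
  · simp only [e4, e7]
    ring
end

section
/- Let β ∈ ℝ, λ ∈ ℝ, and let n be a smooth function and φ₁, φ₂ : ℝ² → ℝ smooth functions satisfying the Lax pair of equation (17): (φ₁)_x = (β+λn)φ₁ + φ₂, (φ₂)_x = -(β+λn)φ₂, (φ₁)_t = (2λ² + λ(2β/n - (1/n)_x))φ₁ + (2λ/n)φ₂, (φ₂)_t = -(2λ² + λ(2β/n - (1/n)_x))φ₂, with n nowhere zero. Then the compatibility condition (φᵢ)_{xt} = (φᵢ)_{tx} for i = 1, 2 holds if and only if n satisfies n_t = (-(1/n)_x + 2β(1/n))_x. -/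
open Function

lemma diffAt_fst {f : ℝ → ℝ → ℝ} (hf : ContDiff ℝ (⊤ : ℕ∞) (uncurry f)) (x t : ℝ) :
    DifferentiableAt ℝ (fun x' => f x' t) x :=
  (hf.differentiable (by simp) (x, t)).comp (f := fun x' : ℝ => (x', t)) x (differentiableAt_id.prodMk (differentiableAt_const t))

lemma diffAt_snd {f : ℝ → ℝ → ℝ} (hf : ContDiff ℝ (⊤ : ℕ∞) (uncurry f)) (x t : ℝ) :
    DifferentiableAt ℝ (fun t' => f x t') t :=
  (hf.differentiable (by simp) (x, t)).comp t ((differentiableAt_const x).prodMk differentiableAt_id)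

lemma pdx_eq_fderiv {f : ℝ → ℝ → ℝ} (hf : ContDiff ℝ (⊤ : ℕ∞) (uncurry f)) (x t : ℝ) :
    pdx f x t = fderiv ℝ (uncurry f) (x, t) (1, 0) := by
  have h1 : HasFDerivAt (fun x' : ℝ => (x', t)) (ContinuousLinearMap.inl ℝ ℝ ℝ) x :=
    (hasFDerivAt_id x).prodMk (hasFDerivAt_const t x)
  have h2 := ((hf.differentiable (by simp) (x, t)).hasFDerivAt.comp x h1)
  have := h2.hasDerivAt.deriv
  simpa [pdx, Function.comp_def] using this

lemma pdx_contDiff {f : ℝ → ℝ → ℝ} (hf : ContDiff ℝ (⊤ : ℕ∞) (uncurry f)) :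
    ContDiff ℝ (⊤ : ℕ∞) (uncurry (pdx f)) := by
  have h : ContDiff ℝ (⊤ : ℕ∞) (fun p : ℝ × ℝ => fderiv ℝ (uncurry f) p (1, 0)) :=
    (ContDiff.fderiv_right hf ((by simp))).clm_apply contDiff_const
  have he : uncurry (pdx f) = fun p : ℝ × ℝ => fderiv ℝ (uncurry f) p (1, 0) := by
    funext p
    exact pdx_eq_fderiv hf p.1 p.2
  rw [he]; exact h

/-- zero-curvature formulation of equation (17): for a nontrivial
solution (φ₁, φ₂) of the Lax pair, the compatibility condition (φᵢ)_{xt} = (φᵢ)_{tx}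
holds iff n satisfies n_t = (-(1/n)_x + 2β(1/n))_x. -/
theorem stmt_19 (β lam : ℝ) (hlam : lam ≠ 0) (n : ℝ → ℝ → ℝ)
    (hn : ContDiff ℝ (⊤ : ℕ∞) (Function.uncurry n)) (hn0 : ∀ x t, n x t ≠ 0)
    (φ₁ φ₂ : ℝ → ℝ → ℝ)
    (hφ₁s : ContDiff ℝ (⊤ : ℕ∞) (Function.uncurry φ₁)) (hφ₂s : ContDiff ℝ (⊤ : ℕ∞) (Function.uncurry φ₂))
    (hφ : ∀ x t, ¬(φ₁ x t = 0 ∧ φ₂ x t = 0))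
    (hφ₁x : ∀ x t, pdx φ₁ x t = (β + lam * n x t) * φ₁ x t + φ₂ x t)
    (hφ₂x : ∀ x t, pdx φ₂ x t = -(β + lam * n x t) * φ₂ x t)
    (hφ₁t : ∀ x t, pdt φ₁ x t =
      (2 * lam ^ 2 + lam * (2 * β / n x t - pdx (fun a b => 1 / n a b) x t)) * φ₁ x t
        + (2 * lam / n x t) * φ₂ x t)
    (hφ₂t : ∀ x t, pdt φ₂ x t =
      -(2 * lam ^ 2 + lam * (2 * β / n x t - pdx (fun a b => 1 / n a b) x t)) * φ₂ x t) :
    ((∀ x t, pdt (pdx φ₁) x t = pdx (pdt φ₁) x t)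
      ∧ (∀ x t, pdt (pdx φ₂) x t = pdx (pdt φ₂) x t))
    ↔ (∀ x t, pdt n x t =
        pdx (fun x t => -pdx (fun a b => 1 / n a b) x t + 2 * β * (1 / n x t)) x t) := by
  have hinv : ContDiff ℝ (⊤ : ℕ∞) (uncurry fun a b => 1 / n a b) := by
    have he : (uncurry fun a b => 1 / n a b) = fun p : ℝ × ℝ => 1 / uncurry n p := rfl
    rw [he]
    exact contDiff_const.div hn (fun p => hn0 p.1 p.2)
  have hg : ContDiff ℝ (⊤ : ℕ∞) (uncurry (pdx fun a b => 1 / n a b)) := pdx_contDiff hinv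
  -- pointwise key identities
  have key1 : ∀ x t, pdt (pdx φ₁) x t - pdx (pdt φ₁) x t
      = lam * (pdt n x t
          - pdx (fun x t => -pdx (fun a b => 1 / n a b) x t + 2 * β * (1 / n x t)) x t)
        * φ₁ x t := by
    intro x t
    set G := pdx (fun a b => 1 / n a b) x t with hGdef
    set G₂ := pdx (pdx fun a b => 1 / n a b) x t with hG2def
    -- t derivative of pdx φ₁
    have hfx : pdx φ₁ = fun x t => (β + lam * n x t) * φ₁ x t + φ₂ x t :=
      funext fun x => funext fun t => hφ₁x x t
    have hnt : HasDerivAt (fun t' => n x t') (pdt n x t) t := (diffAt_snd hn x t).hasDerivAt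
    have hA : HasDerivAt (fun t' => β + lam * n x t') (lam * pdt n x t) t :=
      (hnt.const_mul lam).const_add β
    have hp1t : HasDerivAt (fun t' => φ₁ x t') (pdt φ₁ x t) t := (diffAt_snd hφ₁s x t).hasDerivAt
    have hp2t : HasDerivAt (fun t' => φ₂ x t') (pdt φ₂ x t) t := (diffAt_snd hφ₂s x t).hasDerivAt
    have hL : pdt (pdx φ₁) x t
        = (lam * pdt n x t * φ₁ x t + (β + lam * n x t) * pdt φ₁ x t) + pdt φ₂ x t := by
      rw [hfx]
      exact ((hA.mul hp1t).add hp2t).deriv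
    -- x derivative of pdt φ₁
    have hft : pdt φ₁ = fun x t =>
        (2 * lam ^ 2 + lam * (2 * β / n x t - pdx (fun a b => 1 / n a b) x t)) * φ₁ x t
          + (2 * lam / n x t) * φ₂ x t :=
      funext fun x => funext fun t => hφ₁t x t
    have hGx : HasDerivAt (fun x' => 1 / n x' t) G x := (diffAt_fst hinv x t).hasDerivAt
    have hG2x : HasDerivAt (fun x' => pdx (fun a b => 1 / n a b) x' t) G₂ x :=
      (diffAt_fst hg x t).hasDerivAt
    have h2b : HasDerivAt (fun x' => 2 * β / n x' t) (2 * β * G) x := by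
      have := hGx.const_mul (2 * β)
      simpa [mul_one_div, div_eq_mul_inv] using this
    have h2l : HasDerivAt (fun x' => 2 * lam / n x' t) (2 * lam * G) x := by
      have := hGx.const_mul (2 * lam)
      simpa [mul_one_div, div_eq_mul_inv] using this
    have hB : HasDerivAt
        (fun x' => 2 * lam ^ 2 + lam * (2 * β / n x' t - pdx (fun a b => 1 / n a b) x' t))
        (lam * (2 * β * G - G₂)) x :=
      ((h2b.sub hG2x).const_mul lam).const_add (2 * lam ^ 2)
    have hp1x : HasDerivAt (fun x' => φ₁ x' t) (pdx φ₁ x t) x := (diffAt_fst hφ₁s x t).hasDerivAt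
    have hp2x : HasDerivAt (fun x' => φ₂ x' t) (pdx φ₂ x t) x := (diffAt_fst hφ₂s x t).hasDerivAt
    have hR : pdx (pdt φ₁) x t
        = (lam * (2 * β * G - G₂) * φ₁ x t
            + (2 * lam ^ 2 + lam * (2 * β / n x t - G)) * pdx φ₁ x t)
          + (2 * lam * G * φ₂ x t + (2 * lam / n x t) * pdx φ₂ x t) := by
      rw [hft]
      exact ((hB.mul hp1x).add (h2l.mul hp2x)).deriv
    -- the RHS of the equation
    have hRHS : pdx (fun x t => -pdx (fun a b => 1 / n a b) x t + 2 * β * (1 / n x t)) x t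
        = -G₂ + 2 * β * G := by
      exact (hG2x.neg.add (hGx.const_mul (2 * β))).deriv
    rw [hL, hR, hRHS, hφ₁x, hφ₂x, hφ₁t, hφ₂t]
    have hN : n x t ≠ 0 := hn0 x t
    field_simp
    ring
  have key2 : ∀ x t, pdt (pdx φ₂) x t - pdx (pdt φ₂) x t
      = -(lam * (pdt n x t
          - pdx (fun x t => -pdx (fun a b => 1 / n a b) x t + 2 * β * (1 / n x t)) x t)
        * φ₂ x t) := by
    intro x t
    set G := pdx (fun a b => 1 / n a b) x t with hGdef
    set G₂ := pdx (pdx fun a b => 1 / n a b) x t with hG2def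
    have hfx : pdx φ₂ = fun x t => -(β + lam * n x t) * φ₂ x t :=
      funext fun x => funext fun t => hφ₂x x t
    have hnt : HasDerivAt (fun t' => n x t') (pdt n x t) t := (diffAt_snd hn x t).hasDerivAt
    have hA : HasDerivAt (fun t' => -(β + lam * n x t')) (-(lam * pdt n x t)) t :=
      ((hnt.const_mul lam).const_add β).neg
    have hp2t : HasDerivAt (fun t' => φ₂ x t') (pdt φ₂ x t) t := (diffAt_snd hφ₂s x t).hasDerivAt
    have hL : pdt (pdx φ₂) x t
        = -(lam * pdt n x t) * φ₂ x t + -(β + lam * n x t) * pdt φ₂ x t := by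
      rw [hfx]
      exact (hA.mul hp2t).deriv
    have hft : pdt φ₂ = fun x t =>
        -(2 * lam ^ 2 + lam * (2 * β / n x t - pdx (fun a b => 1 / n a b) x t)) * φ₂ x t :=
      funext fun x => funext fun t => hφ₂t x t
    have hGx : HasDerivAt (fun x' => 1 / n x' t) G x := (diffAt_fst hinv x t).hasDerivAt
    have hG2x : HasDerivAt (fun x' => pdx (fun a b => 1 / n a b) x' t) G₂ x :=
      (diffAt_fst hg x t).hasDerivAt
    have h2b : HasDerivAt (fun x' => 2 * β / n x' t) (2 * β * G) x := by
      have := hGx.const_mul (2 * β)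
      simpa [mul_one_div, div_eq_mul_inv] using this
    have hB : HasDerivAt
        (fun x' => -(2 * lam ^ 2 + lam * (2 * β / n x' t - pdx (fun a b => 1 / n a b) x' t)))
        (-(lam * (2 * β * G - G₂))) x :=
      (((h2b.sub hG2x).const_mul lam).const_add (2 * lam ^ 2)).neg
    have hp2x : HasDerivAt (fun x' => φ₂ x' t) (pdx φ₂ x t) x := (diffAt_fst hφ₂s x t).hasDerivAt
    have hR : pdx (pdt φ₂) x t
        = -(lam * (2 * β * G - G₂)) * φ₂ x t
            + -(2 * lam ^ 2 + lam * (2 * β / n x t - G)) * pdx φ₂ x t := by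
      rw [hft]
      exact (hB.mul hp2x).deriv
    have hRHS : pdx (fun x t => -pdx (fun a b => 1 / n a b) x t + 2 * β * (1 / n x t)) x t
        = -G₂ + 2 * β * G :=
      (hG2x.neg.add (hGx.const_mul (2 * β))).deriv
    rw [hL, hR, hRHS, hφ₂x, hφ₂t]
    have hN : n x t ≠ 0 := hn0 x t
    field_simp
    ring
  constructor
  · rintro ⟨h1, h2⟩ x t
    have e1 := key1 x t
    have e2 := key2 x t
    rw [h1 x t, sub_self] at e1
    rw [h2 x t, sub_self] at e2
    have hE : pdt n x t
        - pdx (fun x t => -pdx (fun a b => 1 / n a b) x t + 2 * β * (1 / n x t)) x t = 0 := by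
      rcases not_and_or.mp (hφ x t) with h | h
      · have := mul_eq_zero.mp e1.symm
        rcases this with h' | h'
        · rcases mul_eq_zero.mp h' with h'' | h''
          · exact absurd h'' hlam
          · exact h''
        · exact absurd h' h
      · have e2' : lam * (pdt n x t
            - pdx (fun x t => -pdx (fun a b => 1 / n a b) x t + 2 * β * (1 / n x t)) x t)
            * φ₂ x t = 0 := by linarith
        rcases mul_eq_zero.mp e2' with h' | h'
        · rcases mul_eq_zero.mp h' with h'' | h''
          · exact absurd h'' hlam
          · exact h''
        · exact absurd h' h
    linarith [hE]
  · intro h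
    constructor
    · intro x t
      have := key1 x t
      rw [h x t, sub_self] at this
      simp at this
      linarith
    · intro x t
      have := key2 x t
      rw [h x t, sub_self] at this
      simp at this
      linarith
end
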